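/- arXiv:1512.06944 — 3 statements merged into one kernel-verified Lean document; each statement's English description precedes it below -/
import Mathlib

section
/- Projection of distance steps: if t ⇝¹_{α,d} t′ is a distance step of level l, then for all k ≥ l, π_k(t) ⇝¹_{α,d} π_k(t′) is also a distance step of level l; and if l > k, then π_k(t) = π_k(t′). -/
/-- Finite trees over an action alphabet `A`: finite formal sums `Σᵢ aᵢ·tᵢ`. -/
inductive FTree (A : Type) where
  | node : List (A × FTree A) → FTree A

namespace FTree

variable {A : Type}

/-- The empty tree `0`. -/
def zero : FTree A := node []

/-- Sum of two trees. -/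
def add : FTree A → FTree A → FTree A
  | node l, node l' => node (l ++ l')

instance : Add (FTree A) := ⟨add⟩

/-- Prefixing: `a·t`. -/
def pre (a : A) (t : FTree A) : FTree A := node [(a, t)]

/-- `proj k t` is the `k`-th projection (cut) of `t`: its first `k` levels. -/
def proj : ℕ → FTree A → FTree A
  | 0, _ => node []
  | _+1, node [] => node []
  | k+1, node ((a, t) :: l) =>
      match proj (k+1) (node l) with
      | node l' => node ((a, proj k t) :: l')

end FTree

section Steps

variable {A : Type} [MetricSpace A]

open FTree

/-- One-step transformation (distance step) `t ⇝¹_{α,c} t'`. -/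
inductive Step (α : ℝ) : ℝ → FTree A → FTree A → Prop
  | dup (t : FTree A) {c : ℝ} (h : 0 ≤ c) : Step α c t (t + t)
  | merge (t : FTree A) {c : ℝ} (h : 0 ≤ c) : Step α c (t + t) t
  | relabel {a b : A} (t : FTree A) {c : ℝ} (h : dist a b ≤ c) :
      Step α c (pre a t) (pre b t)
  | addCong {c : ℝ} {t t' : FTree A} (s : FTree A) :
      Step α c t t' → Step α c (t + s) (t' + s)
  | preCong {c : ℝ} {t t' : FTree A} (a : A) :
      Step α c t t' → Step α (α * c) (pre a t) (pre a t')

/-- Finite sequences of distance steps, with total cost. -/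
inductive Chain (α : ℝ) : ℝ → FTree A → FTree A → Prop
  | nil (t : FTree A) : Chain α 0 t t
  | cons {c e : ℝ} {t u v : FTree A} :
      Step α c t u → Chain α e u v → Chain α (c + e) t v

/-- The global distance relation `t ⇝_{α,d} t'`. -/
def GDist (α d : ℝ) (t t' : FTree A) : Prop := ∃ c ≤ d, Chain α c t t'

end Steps


section Levels

variable {A : Type} [MetricSpace A]

open FTree

/-- One-step transformation annotated with its level. -/
inductive StepL (α : ℝ) : ℕ → ℝ → FTree A → FTree A → Prop
  | dup (t : FTree A) {c : ℝ} (h : 0 ≤ c) : StepL α 1 c t (t + t)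
  | merge (t : FTree A) {c : ℝ} (h : 0 ≤ c) : StepL α 1 c (t + t) t
  | relabel {a b : A} (t : FTree A) {c : ℝ} (h : dist a b ≤ c) :
      StepL α 1 c (pre a t) (pre b t)
  | addCong {l : ℕ} {c : ℝ} {t t' : FTree A} (s : FTree A) :
      StepL α l c t t' → StepL α l c (t + s) (t' + s)
  | preCong {l : ℕ} {c : ℝ} {t t' : FTree A} (a : A) :
      StepL α l c t t' → StepL α (l + 1) (α * c) (pre a t) (pre a t')


lemma FTree.proj_zero (t : FTree A) : proj 0 t = node [] := by
  cases t; simp [proj]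

lemma FTree.add_def (l l' : List (A × FTree A)) :
    node l + node l' = node (l ++ l') := rfl

lemma FTree.proj_add (k : ℕ) (t t' : FTree A) :
    proj k (t + t') = proj k t + proj k t' := by
  induction k with
  | zero => rw [proj_zero, proj_zero, proj_zero]; rfl
  | succ k ih =>
    clear ih
    obtain ⟨l⟩ := t
    obtain ⟨l'⟩ := t'
    induction l with
    | nil =>
      rw [add_def, List.nil_append]
      have h0 : proj (k+1) (node [] : FTree A) = node [] := by simp [proj]
      rw [h0]
      cases hh : proj (k+1) (node l') with
      | node m => rw [add_def, List.nil_append]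
    | cons hd tl ihl =>
      obtain ⟨a, u⟩ := hd
      rw [add_def] at ihl ⊢
      rw [List.cons_append]
      rw [show proj (k+1) (node ((a,u) :: (tl ++ l'))) =
          (match proj (k+1) (node (tl ++ l')) with
           | node m => node ((a, proj k u) :: m)) from by simp [proj],
        show proj (k+1) (node ((a,u) :: tl)) =
          (match proj (k+1) (node tl) with
           | node m => node ((a, proj k u) :: m)) from by simp [proj]]
      rw [ihl]
      cases hh : proj (k+1) (node tl) with
      | node m =>
        cases hh' : proj (k+1) (node l') with
        | node m' => rw [add_def, add_def, List.cons_append]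

lemma FTree.proj_pre (k : ℕ) (a : A) (t : FTree A) :
    proj (k+1) (pre a t) = pre a (proj k t) := by simp [proj, pre]

/-- projections of distance steps: a step of level `l` projects to a
step of level `l` under `π_k` for `k ≥ l`, and `π_k(t) = π_k(t')` if `l > k`. -/
theorem stepL_proj {α : ℝ} (hα0 : 0 < α) (hα1 : α ≤ 1)
    {l : ℕ} {c : ℝ} {t t' : FTree A} (h : StepL α l c t t') :
    (∀ k, l ≤ k → StepL α l c (proj k t) (proj k t')) ∧
    (∀ k, l > k → proj k t = proj k t') := by
  induction h with
  | dup t h =>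
    constructor
    · intro k hk
      rw [proj_add]
      exact StepL.dup _ h
    · intro k hk
      interval_cases k
      rw [proj_zero, proj_zero]
  | merge t h =>
    constructor
    · intro k hk
      rw [proj_add]
      exact StepL.merge _ h
    · intro k hk
      interval_cases k
      rw [proj_zero, proj_zero]
  | relabel t h =>
    constructor
    · intro k hk
      obtain ⟨k, rfl⟩ := Nat.exists_eq_add_of_le hk
      rw [Nat.add_comm, proj_pre, proj_pre]
      exact StepL.relabel _ h
    · intro k hk
      interval_cases k
      rw [proj_zero, proj_zero]
  | addCong s hs ih =>
    constructor
    · intro k hk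
      rw [proj_add, proj_add]
      exact StepL.addCong _ (ih.1 k hk)
    · intro k hk
      rw [proj_add, proj_add, ih.2 k hk]
  | preCong a hs ih =>
    constructor
    · intro k hk
      obtain ⟨m, rfl⟩ : ∃ m, k = m + 1 := ⟨k - 1, by omega⟩
      rw [proj_pre, proj_pre]
      exact StepL.preCong _ (ih.1 m (by omega))
    · intro k hk
      match k with
      | 0 => rw [proj_zero, proj_zero]
      | m+1 =>
        rw [proj_pre, proj_pre, ih.2 m (by omega)]


end Levels
end

section
/- In a diabolo multi-stage graph connecting stage sets S₀ and S_m, every stage satisfies |S_i| ≤ max(|S₀|, |S_m|). -/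
/-- A multi-stage graph on node type `V`: nodes are partitioned into stages
`S₀, …, S_m` (via `stage`), and every arc goes from a stage to the next one. -/
structure MSGraph (V : Type*) where
  m : ℕ
  stage : V → ℕ
  stage_le : ∀ v, stage v ≤ m
  T : V → V → Prop
  arc_stage : ∀ {v w}, T v w → stage w = stage v + 1

namespace MSGraph

variable {V : Type*} (G : MSGraph V)

/-- The arc relation induced on a subset `U` of the nodes. -/
def TOn (U : Set V) (v w : V) : Prop := v ∈ U ∧ w ∈ U ∧ G.T v w

/-- The subgraph induced by `U` is totally sides connecting (tsc): every stage-0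
node is connected by a directed path to some stage-`m` node, and every stage-`m`
node is reachable by a directed path from some stage-0 node. -/
def tscOn (U : Set V) : Prop :=
  (∀ v ∈ U, G.stage v = 0 →
    ∃ w ∈ U, G.stage w = G.m ∧ Relation.ReflTransGen (G.TOn U) v w) ∧
  (∀ w ∈ U, G.stage w = G.m →
    ∃ v ∈ U, G.stage v = 0 ∧ Relation.ReflTransGen (G.TOn U) v w)

/-- The subgraph induced by `U` is totally both-ways connected (tbwc): it is tsc
and every intermediate node has an incoming and an outgoing arc. -/
def tbwcOn (U : Set V) : Prop :=
  G.tscOn U ∧ ∀ v ∈ U, 0 < G.stage v → G.stage v < G.m →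
    (∃ u ∈ U, G.TOn U u v) ∧ (∃ w ∈ U, G.TOn U v w)

/-- The `i`-th stage `S_i` of the graph. -/
def stageSet (i : ℕ) : Set V := {v | G.stage v = i}

/-- A tbwc multi-stage graph is a diabolo if it has a singleton stage `S_i` such
that every node before stage `i` has out-degree exactly 1 and every node after
stage `i` has in-degree exactly 1. -/
def diabolo : Prop :=
  G.tbwcOn Set.univ ∧ ∃ i ≤ G.m, (G.stageSet i).ncard = 1 ∧
    (∀ v, G.stage v < i → ∃! w, G.T v w) ∧
    (∀ w, i < G.stage w → ∃! u, G.T u w)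

end MSGraph

/-- in a diabolo, every stage satisfies `|S_i| ≤ max(|S₀|, |S_m|)`. -/
theorem diabolo_stage_bound {V : Type*} [Finite V] (G : MSGraph V)
    (h : G.diabolo) (i : ℕ) :
    (G.stageSet i).ncard ≤ max (G.stageSet 0).ncard (G.stageSet G.m).ncard := by

  classical
  obtain ⟨⟨⟨hts1, hts2⟩, hmid⟩, i₀, hi₀m, hcard, hout, hin⟩ := h
  have pred_ex : ∀ v : V, 0 < G.stage v → ∃ u, G.T u v := by
    intro v hv
    rcases lt_or_eq_of_le (G.stage_le v) with hlt | heq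
    · obtain ⟨⟨u, -, -, -, hT⟩, -⟩ := hmid v (Set.mem_univ v) hv hlt
      exact ⟨u, hT⟩
    · obtain ⟨v₀, -, hv₀, hpath⟩ := hts2 v (Set.mem_univ v) heq
      rcases hpath.cases_tail with h' | ⟨c, -, hc⟩
      · subst h'; omega
      · exact ⟨c, hc.2.2⟩
  have succ_ex : ∀ v : V, G.stage v < G.m → ∃ w, G.T v w := by
    intro v hv
    rcases Nat.eq_zero_or_pos (G.stage v) with h0 | hpos
    · obtain ⟨w, -, hwm, hpath⟩ := hts1 v (Set.mem_univ v) h0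
      rcases hpath.cases_head with h' | ⟨c, hc, -⟩
      · subst h'; omega
      · exact ⟨c, hc.2.2⟩
    · obtain ⟨-, w, -, hT⟩ := hmid v (Set.mem_univ v) hpos hv
      exact ⟨w, hT.2.2⟩
  let pred : V → V := fun v => if h : ∃ u, G.T u v then h.choose else v
  have pred_spec : ∀ v, 0 < G.stage v → G.T (pred v) v := by
    intro v hv
    have h := pred_ex v hv
    simp only [pred, dif_pos h]
    exact h.choose_spec
  let succ : V → V := fun v => if h : ∃ w, G.T v w then h.choose else v
  have succ_spec : ∀ v, G.stage v < G.m → G.T v (succ v) := by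
    intro v hv
    have h := succ_ex v hv
    simp only [succ, dif_pos h]
    exact h.choose_spec
  have back : ∀ j, 0 < j → j ≤ i₀ →
      (G.stageSet j).ncard ≤ (G.stageSet (j-1)).ncard := by
    intro j hj hji
    apply Set.ncard_le_ncard_of_injOn pred
    · intro v hv
      have hs : G.stage v = j := hv
      have hp := pred_spec v (by omega)
      have hst := G.arc_stage hp
      show G.stage (pred v) = j - 1
      omega
    · intro v hv v' hv' heq
      have hsv : G.stage v = j := hv
      have hsv' : G.stage v' = j := hv'
      have hp := pred_spec v (by omega)
      have hp' := pred_spec v' (by omega)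
      rw [heq] at hp
      have hst := G.arc_stage hp'
      obtain ⟨w, -, huniq⟩ := hout (pred v') (by omega)
      rw [huniq v hp, huniq v' hp']
  have forward : ∀ j, i₀ ≤ j → j < G.m →
      (G.stageSet j).ncard ≤ (G.stageSet (j+1)).ncard := by
    intro j hj hjm
    apply Set.ncard_le_ncard_of_injOn succ
    · intro v hv
      have hs : G.stage v = j := hv
      have hp := succ_spec v (by omega)
      have hst := G.arc_stage hp
      show G.stage (succ v) = j + 1
      omega
    · intro v hv v' hv' heq
      have hsv : G.stage v = j := hv
      have hsv' : G.stage v' = j := hv'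
      have hp := succ_spec v (by omega)
      have hp' := succ_spec v' (by omega)
      rw [heq] at hp
      have hst := G.arc_stage hp'
      obtain ⟨w, -, huniq⟩ := hin (succ v') (by omega)
      rw [huniq v hp, huniq v' hp']
  have backAll : ∀ j, j ≤ i₀ → (G.stageSet j).ncard ≤ (G.stageSet 0).ncard := by
    intro j
    induction j with
    | zero => exact fun _ => le_refl _
    | succ k ih =>
      intro hk
      have h1 := back (k+1) (by omega) hk
      simpa using le_trans h1 (ih (by omega))
  have fwdAll : ∀ k j, j + k = G.m → i₀ ≤ j →
      (G.stageSet j).ncard ≤ (G.stageSet G.m).ncard := by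
    intro k
    induction k with
    | zero =>
      intro j hjm _
      have : j = G.m := by omega
      rw [this]
    | succ k ih =>
      intro j hjm hj
      exact le_trans (forward j hj (by omega)) (ih (j+1) (by omega) (by omega))
  rcases le_or_gt i i₀ with hcase | hcase
  · exact le_trans (backAll i hcase) (le_max_left _ _)
  · rcases le_or_gt i G.m with him | him
    · exact le_trans (fwdAll (G.m - i) i (by omega) (by omega)) (le_max_right _ _)
    · have hempty : G.stageSet i = ∅ := by
        ext v
        simp only [MSGraph.stageSet, Set.mem_setOf_eq, Set.mem_empty_iff_false,
          iff_false]
        have := G.stage_le v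
        omega
      simp [hempty]
end

section
/- In a disjoint union of diabolos connecting stage sets S₀ and S_m, every intermediate stage satisfies |S_i| ≤ |S₀| + |S_m|. Moreover, the bound with max(|S₀|,|S_m|) in place of |S₀|+|S_m| can fail: there is a disjoint union of two 3-stage diabolos with |S₀| = |S₂| = 9 and |S₁| = 10. -/
/-- Generic surjection cardinality bound. -/
lemma aux_ncard_le_of_surj {V : Type*} [Finite V] (f : V → V) (A B : Set V)
    (h : ∀ b ∈ B, ∃ a ∈ A, f a = b) : B.ncard ≤ A.ncard := by
  have hsub : B ⊆ f '' A := by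
    intro b hb
    obtain ⟨a, ha, hfa⟩ := h b hb
    exact ⟨a, ha, hfa⟩
  exact (Set.ncard_le_ncard hsub (A.toFinite.image f)).trans (Set.ncard_image_le A.toFinite)

lemma aux_stage_bound {V : Type*} [Finite V] (G : MSGraph V) (h : G.diabolo) (k : ℕ) :
    (G.stageSet k).ncard ≤ (G.stageSet 0).ncard + (G.stageSet G.m).ncard := by
  classical
  obtain ⟨⟨_, hmid⟩, i, him, hcard, hout, hin⟩ := h
  -- trivial cases
  rcases Nat.lt_or_ge k G.m with hkm | hkm
  swap
  · rcases eq_or_lt_of_le hkm with h' | h'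
    · rw [← h']; exact Nat.le_add_left _ _
    · have : G.stageSet k = ∅ := by
        ext v; simp only [MSGraph.stageSet, Set.mem_setOf_eq, Set.mem_empty_iff_false,
          iff_false]
        intro hv; have := G.stage_le v; omega
      simp [this]
  rcases Nat.eq_zero_or_pos k with rfl | hk0
  · exact Nat.le_add_right _ _
  -- now 0 < k < m
  rcases le_or_gt k i with hki | hki
  · -- ascending chain: ncard S_k ≤ ncard S_0
    set f : V → V := fun v => if h : ∃! w, G.T v w then h.choose else v with hf
    have hfspec : ∀ u w, (∃! x, G.T u x) → G.T u w → f u = w := by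
      intro u w hu huw
      simp only [hf, dif_pos hu]
      exact (hu.choose_spec.2 w huw).symm
    have claim : ∀ j, j ≤ i → j < G.m → (G.stageSet j).ncard ≤ (G.stageSet 0).ncard := by
      intro j
      induction j with
      | zero => intro _ _; exact le_rfl
      | succ j ih =>
        intro hji hjm
        have step : (G.stageSet (j + 1)).ncard ≤ (G.stageSet j).ncard := by
          apply aux_ncard_le_of_surj f
          intro w hw
          have hsw : G.stage w = j + 1 := hw
          obtain ⟨u, -, -, -, huw⟩ := (hmid w trivial (by omega) (by omega)).1
          have hsu : G.stage u = j := by have := G.arc_stage huw; omega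
          refine ⟨u, hsu, hfspec u w (hout u ?_) huw⟩
          omega
        exact step.trans (ih (by omega) (by omega))
    exact (claim k hki hkm).trans (Nat.le_add_right _ _)
  · -- descending chain: ncard S_k ≤ ncard S_m
    set g : V → V := fun w => if h : ∃! u, G.T u w then h.choose else w with hg
    have hgspec : ∀ u w, (∃! x, G.T x w) → G.T u w → g w = u := by
      intro u w hw huw
      simp only [hg, dif_pos hw]
      exact (hw.choose_spec.2 u huw).symm
    have claim : ∀ d j, j + d = G.m → i < j → (G.stageSet j).ncard ≤ (G.stageSet G.m).ncard := by
      intro d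
      induction d with
      | zero => intro j hj _; rw [Nat.add_zero] at hj; rw [hj]
      | succ d ih =>
        intro j hj hij
        have step : (G.stageSet j).ncard ≤ (G.stageSet (j + 1)).ncard := by
          apply aux_ncard_le_of_surj g
          intro v hv
          have hsv : G.stage v = j := hv
          obtain ⟨w, -, -, -, hvw⟩ := (hmid v trivial (by omega) (by omega)).2
          have hsw : G.stage w = j + 1 := by have := G.arc_stage hvw; omega
          refine ⟨w, hsw, hgspec v w (hin w ?_) hvw⟩
          omega
        exact step.trans (ih (j + 1) (by omega) (by omega))
    exact (claim (G.m - k) k (by omega) hki).trans (Nat.le_add_left _ _)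

/-- Diabolo 1: stages of sizes 1, 8, 8, thin stage at i = 0. -/
def D1 : MSGraph (Unit ⊕ Fin 8 ⊕ Fin 8) where
  m := 2
  stage := Sum.elim (fun _ => 0) (Sum.elim (fun _ => 1) fun _ => 2)
  stage_le v := by rcases v with _ | j | k <;> simp
  T v w := (∃ j : Fin 8, v = Sum.inl () ∧ w = Sum.inr (Sum.inl j)) ∨
           (∃ k : Fin 8, v = Sum.inr (Sum.inl k) ∧ w = Sum.inr (Sum.inr k))
  arc_stage := by rintro v w (⟨j, rfl, rfl⟩ | ⟨k, rfl, rfl⟩) <;> simp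

/-- Diabolo 2: stages of sizes 8, 2, 1, thin stage at i = 2. -/
def D2 : MSGraph (Fin 8 ⊕ Fin 2 ⊕ Unit) where
  m := 2
  stage := Sum.elim (fun _ => 0) (Sum.elim (fun _ => 1) fun _ => 2)
  stage_le v := by rcases v with j | k | _ <;> simp
  T v w := (∃ j : Fin 8, v = Sum.inl j ∧ w = Sum.inr (Sum.inl ⟨j.val % 2, by omega⟩)) ∨
           (∃ k : Fin 2, v = Sum.inr (Sum.inl k) ∧ w = Sum.inr (Sum.inr ()))
  arc_stage := by rintro v w (⟨j, rfl, rfl⟩ | ⟨k, rfl, rfl⟩) <;> simp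

lemma aux_ncard_range {α β : Type*} [Fintype α] {f : α → β} (hf : Function.Injective f) :
    (Set.range f).ncard = Fintype.card α := by
  rw [← Set.image_univ, Set.ncard_image_of_injective _ hf, Set.ncard_univ,
    Nat.card_eq_fintype_card]

lemma D1_stage0 : D1.stageSet 0 = {Sum.inl ()} := by
  ext v; rcases v with _ | j | k <;> simp [MSGraph.stageSet, D1]

lemma D1_stage1 : D1.stageSet 1 = Set.range (fun j : Fin 8 => Sum.inr (Sum.inl j)) := by
  ext v; rcases v with _ | j | k <;> simp [MSGraph.stageSet, D1]

lemma D1_stage2 : D1.stageSet 2 = Set.range (fun j : Fin 8 => Sum.inr (Sum.inr j)) := by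
  ext v; rcases v with _ | j | k <;> simp [MSGraph.stageSet, D1]

lemma D2_stage0 : D2.stageSet 0 = Set.range (Sum.inl : Fin 8 → _) := by
  ext v; rcases v with j | k | _ <;> simp [MSGraph.stageSet, D2]

lemma D2_stage1 : D2.stageSet 1 = Set.range (fun k : Fin 2 => Sum.inr (Sum.inl k)) := by
  ext v; rcases v with j | k | _ <;> simp [MSGraph.stageSet, D2]

lemma D2_stage2 : D2.stageSet 2 = {Sum.inr (Sum.inr ())} := by
  ext v; rcases v with j | k | _ <;> simp [MSGraph.stageSet, D2]

lemma D1_diabolo : D1.diabolo := by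
  refine ⟨⟨⟨?_, ?_⟩, ?_⟩, 0, by norm_num [D1], ?_, ?_, ?_⟩
  · intro v _ hv
    rcases v with _ | j | k <;> simp [D1] at hv
    exact ⟨Sum.inr (Sum.inr 0), trivial, by simp [D1],
      Relation.ReflTransGen.head ⟨trivial, trivial, Or.inl ⟨0, rfl, rfl⟩⟩
        (Relation.ReflTransGen.single ⟨trivial, trivial, Or.inr ⟨0, rfl, rfl⟩⟩)⟩
  · intro w _ hw
    rcases w with _ | j | k <;> simp [D1] at hw
    exact ⟨Sum.inl (), trivial, by simp [D1],
      Relation.ReflTransGen.head ⟨trivial, trivial, Or.inl ⟨k, rfl, rfl⟩⟩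
        (Relation.ReflTransGen.single ⟨trivial, trivial, Or.inr ⟨k, rfl, rfl⟩⟩)⟩
  · intro v _ h1 h2
    rcases v with _ | j | k <;> simp [D1] at h1 h2
    exact ⟨⟨Sum.inl (), trivial, trivial, trivial, Or.inl ⟨j, rfl, rfl⟩⟩,
      ⟨Sum.inr (Sum.inr j), trivial, trivial, trivial, Or.inr ⟨j, rfl, rfl⟩⟩⟩
  · rw [D1_stage0]; exact Set.ncard_singleton _
  · intro v hv; simp at hv
  · intro w hw
    rcases w with _ | j | k
    · simp [D1] at hw
    · refine ⟨Sum.inl (), Or.inl ⟨j, rfl, rfl⟩, ?_⟩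
      rintro u (⟨j', rfl, h⟩ | ⟨k', rfl, h⟩)
      · rfl
      · simp at h
    · refine ⟨Sum.inr (Sum.inl k), Or.inr ⟨k, rfl, rfl⟩, ?_⟩
      rintro u (⟨j', rfl, h⟩ | ⟨k', rfl, h⟩)
      · simp at h
      · simp only [Sum.inr.injEq, Sum.inr.injEq] at h
        rw [h]

lemma D2_diabolo : D2.diabolo := by
  refine ⟨⟨⟨?_, ?_⟩, ?_⟩, 2, by norm_num [D2], ?_, ?_, ?_⟩
  · intro v _ hv
    rcases v with j | k | _ <;> simp [D2] at hv
    exact ⟨Sum.inr (Sum.inr ()), trivial, by simp [D2],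
      Relation.ReflTransGen.head ⟨trivial, trivial, Or.inl ⟨j, rfl, rfl⟩⟩
        (Relation.ReflTransGen.single ⟨trivial, trivial, Or.inr ⟨⟨j.val % 2, by omega⟩, rfl, rfl⟩⟩)⟩
  · intro w _ hw
    rcases w with j | k | _ <;> simp [D2] at hw
    exact ⟨Sum.inl 0, trivial, by simp [D2],
      Relation.ReflTransGen.head ⟨trivial, trivial, Or.inl ⟨0, rfl, rfl⟩⟩
        (Relation.ReflTransGen.single ⟨trivial, trivial, Or.inr ⟨⟨(0 : Fin 8).val % 2, by omega⟩, rfl, rfl⟩⟩)⟩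
  · intro v _ h1 h2
    rcases v with j | k | _ <;> simp [D2] at h1 h2
    refine ⟨⟨Sum.inl ⟨k.val, by omega⟩, trivial, trivial, trivial, Or.inl ⟨⟨k.val, by omega⟩, rfl, ?_⟩⟩,
      ⟨Sum.inr (Sum.inr ()), trivial, trivial, trivial, Or.inr ⟨k, rfl, rfl⟩⟩⟩
    congr 2
    exact Fin.ext (by simp [Nat.mod_eq_of_lt k.isLt])
  · rw [D2_stage2]; exact Set.ncard_singleton _
  · intro v hv
    rcases v with j | k | _
    · refine ⟨Sum.inr (Sum.inl ⟨j.val % 2, by omega⟩), Or.inl ⟨j, rfl, rfl⟩, ?_⟩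
      rintro w (⟨j', h, rfl⟩ | ⟨k', h, rfl⟩)
      · simp only [Sum.inl.injEq] at h; rw [h]
      · simp at h
    · refine ⟨Sum.inr (Sum.inr ()), Or.inr ⟨k, rfl, rfl⟩, ?_⟩
      rintro w (⟨j', h, rfl⟩ | ⟨k', h, rfl⟩)
      · simp at h
      · rfl
    · simp [D2] at hv
  · intro w hw
    exfalso
    rcases w with j | k | _ <;> simp [D2] at hw

/-- in a disjoint union of diabolos, every stage satisfies
`|S_i| ≤ |S₀| + |S_m|`; moreover the bound with `max(|S₀|,|S_m|)` can fail:
there are two 3-stage diabolos whose disjoint union has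
`|S₀| = |S₂| = 9` and `|S₁| = 10`. -/
theorem diabolo_union_stage_bound :
    (∀ (ι : Type) [Finite ι] (Vf : ι → Type) [∀ i, Finite (Vf i)]
      (G : ∀ i, MSGraph (Vf i)) (m : ℕ),
      (∀ i, (G i).m = m) → (∀ i, (G i).diabolo) →
      ∀ k : ℕ, ∑ᶠ i, ((G i).stageSet k).ncard ≤
        ∑ᶠ i, ((G i).stageSet 0).ncard + ∑ᶠ i, ((G i).stageSet m).ncard) ∧
    (∃ (V₁ V₂ : Type) (_ : Finite V₁) (_ : Finite V₂)
      (G₁ : MSGraph V₁) (G₂ : MSGraph V₂),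
      G₁.m = 2 ∧ G₂.m = 2 ∧ G₁.diabolo ∧ G₂.diabolo ∧
      (G₁.stageSet 0).ncard + (G₂.stageSet 0).ncard = 9 ∧
      (G₁.stageSet 1).ncard + (G₂.stageSet 1).ncard = 10 ∧
      (G₁.stageSet 2).ncard + (G₂.stageSet 2).ncard = 9) := by
  constructor
  · intro ι _ Vf _ G m hm hd k
    have := Fintype.ofFinite ι
    rw [finsum_eq_sum_of_fintype, finsum_eq_sum_of_fintype, finsum_eq_sum_of_fintype,
      ← Finset.sum_add_distrib]
    refine Finset.sum_le_sum fun i _ => ?_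
    have h := aux_stage_bound (G i) (hd i) k
    rwa [hm i] at h
  · refine ⟨_, _, inferInstance, inferInstance, D1, D2, rfl, rfl, D1_diabolo, D2_diabolo, ?_, ?_, ?_⟩
    · rw [D1_stage0, D2_stage0, Set.ncard_singleton,
        aux_ncard_range Sum.inl_injective]
      simp
    · rw [D1_stage1, D2_stage1, aux_ncard_range (f := fun j : Fin 8 => Sum.inr (Sum.inl j))
        (fun a b h => by simpa using h), aux_ncard_range (f := fun k : Fin 2 => Sum.inr (Sum.inl k))
        (fun a b h => by simpa using h)]
      simp
    · rw [D1_stage2, D2_stage2, Set.ncard_singleton,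
        aux_ncard_range (f := fun j : Fin 8 => Sum.inr (Sum.inr j)) (fun a b h => by simpa using h)]
      simp
end
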